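/- Let $h: (X_A,\sigma_A) \to (X_B,\sigma_B)$ and $g: (X_B,\sigma_B) \to (X_C,\sigma_C)$ be continuous orbit maps. Then $\Psi_h \circ \Psi_g = \Psi_{g\circ h}$ as group homomorphisms from $C(X_C,\mathbb{Z})$ to $C(X_A,\mathbb{Z})$, where $g \circ h$ is equipped with the cocycle data $k_3(x) = k_2^{l_1(x)}(h(x)) + l_2^{k_1(x)}(h(\sigma_A(x)))$, $l_3(x) = l_2^{l_1(x)}(h(x)) + k_2^{k_1(x)}(h(\sigma_A(x)))$. -/

import Mathlib

open Function Finset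

/-- The one-sided topological Markov shift space of a `{0,1}`-matrix `A`. -/
abbrev MarkovShift {N : ℕ} (A : Matrix (Fin N) (Fin N) (Fin 2)) :=
  {x : ℕ → Fin N // ∀ n : ℕ, A (x n) (x (n + 1)) = 1}

/-- The shift map `σ_A` on the one-sided Markov shift. -/
def mshift {N : ℕ} (A : Matrix (Fin N) (Fin N) (Fin 2)) :
    MarkovShift A → MarkovShift A :=
  fun x => ⟨fun n => x.1 (n + 1), fun n => x.2 (n + 1)⟩

/-- Ergodic sums `f^n(x) = ∑_{i<n} f(σ^i x)`. -/
def esum {X : Type*} (σ : X → X) (f : X → ℕ) (n : ℕ) (x : X) : ℕ :=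
  ∑ i ∈ Finset.range n, f (σ^[i] x)

/-- The map `Ψ_h(f)(x) = ∑_{i<l(x)} f(σ_Y^i(h x)) - ∑_{j<k(x)} f(σ_Y^j(h(σ_X x)))`
induced by a continuous orbit map `h` with data `(k, l)`. -/
def cocycleSum {X Y : Type*} (σX : X → X) (σY : Y → Y) (h : X → Y)
    (k l : X → ℕ) (f : Y → ℤ) (x : X) : ℤ :=
  (∑ i ∈ Finset.range (l x), f (σY^[i] (h x))) -
    ∑ j ∈ Finset.range (k x), f (σY^[j] (h (σX x)))

/-!
Summing `Ψ_g f` along a `σ_B`-orbit segment of length `n` gives again a cocycle sum, for `σ_B^n`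
with the ergodic sums `k_2^n, l_2^n` as data. So `Ψ_h (Ψ_g f) x` is a difference of two such sums,
starting at `h x` and `h (σ_A x)`; since `σ_B^{l_1 x} (h x) = σ_B^{k_1 x} (h (σ_A x))`, both end
at the same point of `X_C`, and splitting the Birkhoff sums there merges them into `Ψ_{g∘h} f x`.
-/

section OrbitCocycle

variable {X Y : Type*}

def IsOrbitCocycle (σX : X → X) (σY : Y → Y) (h : X → Y) (k l : X → ℕ) : Prop :=
  ∀ x, σY^[k x] (h (σX x)) = σY^[l x] (h x)

theorem esum_succ (σ : X → X) (f : X → ℕ) (n : ℕ) (x : X) :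
    esum σ f (n + 1) x = esum σ f n x + f (σ^[n] x) :=
  sum_range_succ _ _

theorem cocycleSum_eq_birkhoffSum (σX : X → X) (σY : Y → Y) (h : X → Y) (k l : X → ℕ)
    (f : Y → ℤ) (x : X) :
    cocycleSum σX σY h k l f x
      = birkhoffSum σY f (l x) (h x) - birkhoffSum σY f (k x) (h (σX x)) :=
  rfl

/-- The forward orbits of `u` and `v` run into that of `w`; the sums along them then combine as if
both orbits started at `w`. -/
theorem birkhoffSum_add_sub_birkhoffSum_add {G : Type*} [AddCommGroup G] (σ : X → X)
    (f : X → G) {u v w : X} {p q r s : ℕ} (hu : σ^[r] w = σ^[p] u) (hv : σ^[s] w = σ^[q] v) :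
    birkhoffSum σ f (p + s) u - birkhoffSum σ f (q + r) v
      = (birkhoffSum σ f p u - birkhoffSum σ f r w)
        - (birkhoffSum σ f q v - birkhoffSum σ f s w) := by
  have hw : birkhoffSum σ f s (σ^[r] w) - birkhoffSum σ f r (σ^[s] w)
      = birkhoffSum σ f s w - birkhoffSum σ f r w := by
    -- both sides are `birkhoffSum σ f (r + s) w`, split in the two possible orders
    rw [sub_eq_sub_iff_add_eq_add, add_comm, ← birkhoffSum_add, ← birkhoffSum_add, add_comm]
  rw [birkhoffSum_add, birkhoffSum_add, ← hu, ← hv, add_sub_add_comm, hw]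
  abel

variable {σX : X → X} {σY : Y → Y} {h : X → Y} {k l : X → ℕ}

theorem IsOrbitCocycle.iterate (hc : IsOrbitCocycle σX σY h k l) (n : ℕ) :
    IsOrbitCocycle (σX^[n]) σY h (esum σX k n) (esum σX l n) := by
  induction n with
  | zero => intro x; simp [esum]
  | succ n ih =>
    intro x
    rw [esum_succ, esum_succ]
    calc σY^[esum σX k n x + k (σX^[n] x)] (h (σX^[n + 1] x))
        = σY^[esum σX k n x] (σY^[l (σX^[n] x)] (h (σX^[n] x))) := by
          rw [iterate_add_apply, iterate_succ_apply', hc]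
      _ = σY^[l (σX^[n] x)] (σY^[esum σX l n x] (h x)) := by
          rw [← iterate_add_apply, add_comm, iterate_add_apply, ih x]
      _ = σY^[esum σX l n x + l (σX^[n] x)] (h x) := by
          rw [← iterate_add_apply, add_comm]

theorem IsOrbitCocycle.birkhoffSum_cocycleSum (hc : IsOrbitCocycle σX σY h k l) (f : Y → ℤ)
    (n : ℕ) (x : X) :
    birkhoffSum σX (cocycleSum σX σY h k l f) n x
      = cocycleSum (σX^[n]) σY h (esum σX k n) (esum σX l n) f x := by
  induction n with
  | zero => simp [cocycleSum, esum]
  | succ n ih =>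
    rw [birkhoffSum_succ, ih, cocycleSum_eq_birkhoffSum, cocycleSum_eq_birkhoffSum,
      cocycleSum_eq_birkhoffSum, esum_succ, esum_succ, add_comm (esum σX k n x),
      iterate_succ_apply',
      birkhoffSum_add_sub_birkhoffSum_add σY f (hc.iterate n x) (hc (σX^[n] x)).symm,
      sub_sub_eq_add_sub, add_sub_assoc]

end OrbitCocycle

theorem cocycleSum_comp_general {N M P : ℕ}
    (A : Matrix (Fin N) (Fin N) (Fin 2)) (B : Matrix (Fin M) (Fin M) (Fin 2))
    (C : Matrix (Fin P) (Fin P) (Fin 2))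
    (h : MarkovShift A → MarkovShift B)
    (g : MarkovShift B → MarkovShift C)
    (k1 l1 : MarkovShift A → ℕ)
    (k2 l2 : MarkovShift B → ℕ)
    (horb1 : ∀ x, (mshift B)^[k1 x] (h (mshift A x)) = (mshift B)^[l1 x] (h x))
    (horb2 : ∀ y, (mshift C)^[k2 y] (g (mshift B y)) = (mshift C)^[l2 y] (g y)) :
    ∀ (f : MarkovShift C → ℤ) (x : MarkovShift A),
      cocycleSum (mshift A) (mshift B) h k1 l1
          (cocycleSum (mshift B) (mshift C) g k2 l2 f) x
        = cocycleSum (mshift A) (mshift C) (g ∘ h)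
            (fun x => esum (mshift B) k2 (l1 x) (h x) +
              esum (mshift B) l2 (k1 x) (h (mshift A x)))
            (fun x => esum (mshift B) l2 (l1 x) (h x) +
              esum (mshift B) k2 (k1 x) (h (mshift A x))) f x := by
  intro f x
  have hg : IsOrbitCocycle (mshift B) (mshift C) g k2 l2 := horb2
  have hmeet : g ((mshift B)^[k1 x] (h (mshift A x))) = g ((mshift B)^[l1 x] (h x)) :=
    congrArg g (horb1 x)
  have hv := hg.iterate (k1 x) (h (mshift A x))
  rw [hmeet] at hv
  rw [cocycleSum_eq_birkhoffSum, hg.birkhoffSum_cocycleSum, hg.birkhoffSum_cocycleSum,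
    cocycleSum_eq_birkhoffSum, cocycleSum_eq_birkhoffSum, cocycleSum_eq_birkhoffSum, hmeet,
    add_comm (esum _ k2 _ _)]
  exact (birkhoffSum_add_sub_birkhoffSum_add _ f (hg.iterate (l1 x) (h x)) hv).symm

/-- `Ψ_h ∘ Ψ_g = Ψ_{g∘h}`, where `g ∘ h` carries the cocycle data
`k_3(x) = k_2^{l_1(x)}(h(x)) + l_2^{k_1(x)}(h(σ_A(x)))` and
`l_3(x) = l_2^{l_1(x)}(h(x)) + k_2^{k_1(x)}(h(σ_A(x)))`. -/
theorem cocycleSum_comp {N M P : ℕ}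
    (A : Matrix (Fin N) (Fin N) (Fin 2)) (B : Matrix (Fin M) (Fin M) (Fin 2))
    (C : Matrix (Fin P) (Fin P) (Fin 2))
    (h : MarkovShift A → MarkovShift B) (hlh : IsLocalHomeomorph h)
    (g : MarkovShift B → MarkovShift C) (hlg : IsLocalHomeomorph g)
    (k1 l1 : MarkovShift A → ℕ) (hk1 : Continuous k1) (hl1 : Continuous l1)
    (k2 l2 : MarkovShift B → ℕ) (hk2 : Continuous k2) (hl2 : Continuous l2)
    (horb1 : ∀ x, (mshift B)^[k1 x] (h (mshift A x)) = (mshift B)^[l1 x] (h x))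
    (horb2 : ∀ y, (mshift C)^[k2 y] (g (mshift B y)) = (mshift C)^[l2 y] (g y)) :
    ∀ (f : MarkovShift C → ℤ) (x : MarkovShift A),
      cocycleSum (mshift A) (mshift B) h k1 l1
          (cocycleSum (mshift B) (mshift C) g k2 l2 f) x
        = cocycleSum (mshift A) (mshift C) (g ∘ h)
            (fun x => esum (mshift B) k2 (l1 x) (h x) +
              esum (mshift B) l2 (k1 x) (h (mshift A x)))
            (fun x => esum (mshift B) l2 (l1 x) (h x) +
              esum (mshift B) k2 (k1 x) (h (mshift A x))) f x :=
  cocycleSum_comp_general A B C h g k1 l1 k2 l2 horb1 horb2
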